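/- Let (g,h,φ) be a pre-Lie-morphism triple over a field K of characteristic 0 and let (ω,ϖ,θ) generate a 1-parameter infinitesimal deformation (g_t,h_t,φ_t) with x ·_t y = x·_g y + tω(x,y), u ∗_t v = u·_h v + tϖ(u,v), φ_t = φ + tθ. Suppose the deformation is trivial, i.e. there exist linear maps N: g → g and S: h → h such that for every t ∈ K: (Id_g + tN)(x ·_t y) = (Id_g + tN)(x) ·_g (Id_g + tN)(y) for all x,y ∈ g, (Id_h + tS)(u ∗_t v) = (Id_h + tS)(u) ·_h (Id_h + tS)(v) for all u,v ∈ h, and φ((Id_g + tN)(x)) = (Id_h + tS)(φ_t(x)) for all x ∈ g. Then N is a Nijenhuis operator on (g,·_g), S is a Nijenhuis operator on (h,·_h), and S∘φ∘N = S²∘φ; that is, (N,S) is a Nijenhuis pair on (g,h,φ). -/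
import Mathlib


/-- A binary product satisfies the pre-Lie identity. -/
def PreLieOn {g : Type*} [AddCommGroup g] (p : g → g → g) : Prop :=
  ∀ x y z : g, p (p x y) z - p x (p y z) = p (p y x) z - p y (p x z)

/-- The `t`-deformed product `x ·_t y = x·y + t • ω(x,y)`. -/
def tProd {K g : Type*} [Field K] [AddCommGroup g] [Module K g]
    (mul ω : g → g → g) (t : K) (x y : g) : g :=
  mul x y + t • ω x y

/-- The data `(ω, ϖ, θ)` generates a 1-parameter infinitesimal deformation of the
pre-Lie-morphism triple `(g, h, φ)`. -/
def GeneratesDeformation {K g h : Type*} [Field K] [AddCommGroup g] [Module K g]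
    [AddCommGroup h] [Module K h]
    (mulg : g →ₗ[K] g →ₗ[K] g) (mulh : h →ₗ[K] h →ₗ[K] h) (φ : g →ₗ[K] h)
    (ω : g →ₗ[K] g →ₗ[K] g) (ϖ : h →ₗ[K] h →ₗ[K] h) (θ : g →ₗ[K] h) : Prop :=
  ∀ t : K,
    PreLieOn (tProd (fun a b => mulg a b) (fun a b => ω a b) t) ∧
    PreLieOn (tProd (fun a b => mulh a b) (fun a b => ϖ a b) t) ∧
    (∀ x y : g,
      (φ (tProd (fun a b => mulg a b) (fun a b => ω a b) t x y)
        + t • θ (tProd (fun a b => mulg a b) (fun a b => ω a b) t x y))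
        + t ^ 3 • ϖ (θ x) (θ y)
      = tProd (fun a b => mulh a b) (fun a b => ϖ a b) t (φ x + t • θ x) (φ y + t • θ y))

lemma nij_aux {K M : Type*} [Field K] [CharZero K] [AddCommGroup M] [Module K M]
    (mul ω : M →ₗ[K] M →ₗ[K] M) (N : M →ₗ[K] M)
    (htriv : ∀ (t : K) (x y : M),
      tProd (fun a b => mul a b) (fun a b => ω a b) t x y
        + t • N (tProd (fun a b => mul a b) (fun a b => ω a b) t x y)
      = mul (x + t • N x) (y + t • N y)) :
    ∀ x y : M, mul (N x) (N y) = N (mul (N x) y + mul x (N y) - N (mul x y)) := by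
  intro x y
  have e1 := htriv 1 x y
  have e2 := htriv (-1) x y
  simp only [tProd, one_smul, neg_smul, map_add, map_smul, map_neg, LinearMap.add_apply,
    LinearMap.neg_apply, LinearMap.smul_apply, smul_neg, neg_neg] at e1 e2
  have h2 : (2 : K) • N (ω x y) = (2 : K) • mul (N x) (N y) := by
    linear_combination (norm := module) e1 + e2
  have hB : N (ω x y) = mul (N x) (N y) :=
    smul_right_injective M (by norm_num : (2 : K) ≠ 0) h2
  have hA2 : (2 : K) • (ω x y + N (mul x y)) = (2 : K) • (mul (N x) y + mul x (N y)) := by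
    linear_combination (norm := module) e1 - e2
  have hA : ω x y + N (mul x y) = mul (N x) y + mul x (N y) :=
    smul_right_injective M (by norm_num : (2 : K) ≠ 0) hA2
  rw [← hA, ← hB]
  congr 1
  abel

/-- A trivial 1-parameter infinitesimal deformation of a pre-Lie-morphism
triple `(g, h, φ)` gives rise to a Nijenhuis pair `(N, S)`: `N` and `S` are Nijenhuis
operators on `g` and `h` respectively, and `S∘φ∘N = S²∘φ`. -/
theorem trivial_deformation_gives_nijenhuis_pair {K : Type*} [Field K] [CharZero K]
    {g h : Type*} [AddCommGroup g] [Module K g] [AddCommGroup h] [Module K h]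
    (mulg : g →ₗ[K] g →ₗ[K] g) (mulh : h →ₗ[K] h →ₗ[K] h)
    (hg : PreLieOn fun x y => mulg x y) (hh : PreLieOn fun u v => mulh u v)
    (φ : g →ₗ[K] h) (hφ : ∀ x y : g, φ (mulg x y) = mulh (φ x) (φ y))
    (ω : g →ₗ[K] g →ₗ[K] g) (ϖ : h →ₗ[K] h →ₗ[K] h) (θ : g →ₗ[K] h)
    (hdef : GeneratesDeformation mulg mulh φ ω ϖ θ)
    (N : g →ₗ[K] g) (S : h →ₗ[K] h)
    (htrivg : ∀ (t : K) (x y : g),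
      tProd (fun a b => mulg a b) (fun a b => ω a b) t x y
        + t • N (tProd (fun a b => mulg a b) (fun a b => ω a b) t x y)
      = mulg (x + t • N x) (y + t • N y))
    (htrivh : ∀ (t : K) (u v : h),
      tProd (fun a b => mulh a b) (fun a b => ϖ a b) t u v
        + t • S (tProd (fun a b => mulh a b) (fun a b => ϖ a b) t u v)
      = mulh (u + t • S u) (v + t • S v))
    (htrivφ : ∀ (t : K) (x : g),
      φ (x + t • N x) = (φ x + t • θ x) + t • S (φ x + t • θ x)) :
    (∀ x y : g,
      mulg (N x) (N y) = N (mulg (N x) y + mulg x (N y) - N (mulg x y))) ∧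
    (∀ u v : h,
      mulh (S u) (S v) = S (mulh (S u) v + mulh u (S v) - S (mulh u v))) ∧
    (∀ x : g, S (φ (N x)) = S (S (φ x))) := by
  refine ⟨nij_aux mulg ω N htrivg, nij_aux mulh ϖ S htrivh, fun x => ?_⟩
  have e1 := htrivφ 1 x
  have e2 := htrivφ (-1) x
  simp only [one_smul, neg_smul, map_add, map_neg, neg_neg] at e1 e2
  have h2 : (2 : K) • (φ (N x)) = (2 : K) • (θ x + S (φ x)) := by
    linear_combination (norm := module) e1 - e2
  have hA : φ (N x) = θ x + S (φ x) :=
    smul_right_injective h (by norm_num : (2 : K) ≠ 0) h2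
  have h3 : (2 : K) • S (θ x) = (2 : K) • (0 : h) := by
    linear_combination (norm := module) - e1 - e2
  have hB : S (θ x) = 0 :=
    smul_right_injective h (by norm_num : (2 : K) ≠ 0) h3
  rw [hA, map_add, hB, zero_add]
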